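/- For every integer k ≥ 3 there exists a combinatorial auction whose winner set W has size k such that: (i) some element of the core U assigns strictly positive utility to every winner in W; yet (ii) every element of U that maximizes ∑_{i∈N} π_i over U (every MRC outcome) assigns utility 0 to at least k − 2 winners. -/

import Mathlib

/-- The vector `x` sorted in nondecreasing order. -/
noncomputable def sortVec {n : ℕ} (x : Fin n → ℝ) : Fin n → ℝ := x ∘ Tuple.sort x

/-- `x` leximin-dominates `y`. -/
def LexDom {n : ℕ} (x y : Fin n → ℝ) : Prop :=
  ∃ k : Fin n, (∀ j : Fin n, j < k → sortVec x j = sortVec y j) ∧ sortVec y k < sortVec x k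

/-- The core polytope of a coalition value function `w`. -/
def CorePoly {n : ℕ} (w : Finset (Fin n) → ℝ) : Set (Fin n → ℝ) :=
  {π | (∀ i, 0 ≤ π i) ∧ ∀ S : Finset (Fin n), ∑ i ∈ Finset.univ \ S, π i ≤ w Finset.univ - w S}

/-- An allocation to the coalition `S`: pairwise disjoint bundles of items. -/
def IsAlloc {n m : ℕ} (S : Finset (Fin n)) (a : Fin n → Finset (Fin m)) : Prop :=
  ∀ i ∈ S, ∀ j ∈ S, i ≠ j → Disjoint (a i) (a j)

/-- The coalition value: the maximum total value over allocations to `S`. -/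
noncomputable def coalW {n m : ℕ} (v : Fin n → Finset (Fin m) → ℝ) (S : Finset (Fin n)) : ℝ :=
  sSup (Set.image (fun a : Fin n → Finset (Fin m) => ∑ i ∈ S, v i (a i)) {a | IsAlloc S a})

/-- The set of winners: bidders whose removal strictly decreases the optimal welfare. -/
noncomputable def winners {n m : ℕ} (v : Fin n → Finset (Fin m) → ℝ) : Finset (Fin n) :=
  @Finset.filter _ (fun i => coalW v (Finset.univ \ {i}) < coalW v Finset.univ)
    (Classical.decPred _) Finset.univ

/-!
Take `r + 2` items and `r + 4` bidders (`k = r + 2`): bidder `i < r + 2` wants only item `i`,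
at value `1`, and bidders `r + 2`, `r + 3` want all items except item `r`, resp. `r + 1`, at
value `r`. Upper bounds on coalition values come from item prices (a coalition's welfare is at
most the total price when every bid is covered by the price of its bundle): the welfare is
`r + 2`, exactly the unit bidders win, and removing a unit bidder costs at least `1`. So every
unit vector of a winner lies in the core, and by convexity so does their average, which is
positive on all winners.

Dropping the small bidders `i < r` together with bidder `r` still leaves welfare `r + 1`
(bidder `r + 1` with bidder `r + 3`), so `π(J) + π r ≤ 1` on the core, where `J` is the set of
small bidders; symmetrically `π(J) + π (r + 1) ≤ 1`. Losers get `0`, hence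
`∑ π ≤ 2 - π(J)`, while paying `1` to each of bidders `r` and `r + 1` is a core point of total
`2`. So every MRC outcome vanishes on the `r = k - 2` small bidders.
-/

open Finset

section CorePoly

variable {n : ℕ} {w : Finset (Fin n) → ℝ} {π : Fin n → ℝ}

lemma sum_le_of_mem_corePoly (hπ : π ∈ CorePoly w) (T : Finset (Fin n)) :
    ∑ i ∈ T, π i ≤ w univ - w (univ \ T) := by
  simpa using hπ.2 (univ \ T)

lemma convex_corePoly : Convex ℝ (CorePoly w) := by
  intro x hx y hy a b ha hb hab
  refine ⟨fun i => ?_, fun S => ?_⟩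
  · have := hx.1 i
    have := hy.1 i
    simp only [Pi.add_apply, Pi.smul_apply, smul_eq_mul]
    positivity
  · simp only [Pi.add_apply, Pi.smul_apply, smul_eq_mul, sum_add_distrib, ← mul_sum]
    calc a * ∑ i ∈ univ \ S, x i + b * ∑ i ∈ univ \ S, y i
        ≤ a * (w univ - w S) + b * (w univ - w S) :=
          add_le_add (mul_le_mul_of_nonneg_left (hx.2 S) ha)
            (mul_le_mul_of_nonneg_left (hy.2 S) hb)
      _ = w univ - w S := by rw [← add_mul, hab, one_mul]

lemma single_mem_corePoly {i : Fin n} {c : ℝ} (hc : 0 ≤ c) (hle : ∀ S, w S ≤ w univ)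
    (hi : ∀ S, i ∉ S → w S ≤ w univ - c) : Pi.single i c ∈ CorePoly w := by
  refine ⟨fun j => ?_, fun S => ?_⟩
  · by_cases h : j = i <;> simp [h, hc]
  · rw [sum_pi_single']
    by_cases h : i ∈ S
    · simpa [h] using hle S
    · simp only [mem_sdiff, mem_univ, h, not_false_eq_true, and_self, if_true]
      linarith [hi S h]

end CorePoly

section CoalitionValue

variable {n m : ℕ} {v : Fin n → Finset (Fin m) → ℝ} {S : Finset (Fin n)}

lemma sum_le_coalW {a : Fin n → Finset (Fin m)} (ha : IsAlloc S a) :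
    ∑ i ∈ S, v i (a i) ≤ coalW v S :=
  le_csSup (Set.toFinite _).bddAbove ⟨a, ha, rfl⟩

lemma coalW_le {c : ℝ} (h : ∀ a, IsAlloc S a → ∑ i ∈ S, v i (a i) ≤ c) :
    coalW v S ≤ c :=
  csSup_le ⟨_, fun _ => ∅, fun _ _ _ _ _ => disjoint_bot_left, rfl⟩
    (by rintro _ ⟨a, ha, rfl⟩; exact h a ha)

lemma coalW_le_sum_prices (p : Fin m → ℝ) (hp : ∀ x, 0 ≤ p x)
    (h : ∀ i ∈ S, ∀ A, v i A ≤ ∑ x ∈ A, p x) : coalW v S ≤ ∑ x, p x :=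
  coalW_le fun a ha => calc
    ∑ i ∈ S, v i (a i) ≤ ∑ i ∈ S, ∑ x ∈ a i, p x := sum_le_sum fun i hi => h i hi _
    _ = ∑ x ∈ S.biUnion a, p x := (sum_biUnion ha).symm
    _ ≤ ∑ x, p x := sum_le_univ_sum_of_nonneg hp

lemma eq_zero_of_mem_corePoly_of_notMem_winners {π : Fin n → ℝ}
    (hπ : π ∈ CorePoly (coalW v)) {i : Fin n} (hi : i ∉ winners v) : π i = 0 := by
  have hle : coalW v univ ≤ coalW v (univ \ {i}) := by simpa [winners] using hi
  have := sum_le_of_mem_corePoly hπ {i}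
  rw [sum_singleton] at this
  linarith [hπ.1 i]

end CoalitionValue

section SingleMinded

variable {n m : ℕ} (B : Fin n → Finset (Fin m)) (b : Fin n → ℝ)

def singleMinded (i : Fin n) (A : Finset (Fin m)) : ℝ :=
  if B i ⊆ A then b i else 0

variable {B b} {S : Finset (Fin n)}

lemma sum_le_coalW_singleMinded (hb : ∀ i, 0 ≤ b i) {T : Finset (Fin n)} (hTS : T ⊆ S)
    (hT : (T : Set (Fin n)).PairwiseDisjoint B) :
    ∑ i ∈ T, b i ≤ coalW (singleMinded B b) S := by
  classical
  let a i := if i ∈ T then B i else ∅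
  have ha : IsAlloc S a := by
    intro i _ j _ hij
    by_cases hi : i ∈ T
    · by_cases hj : j ∈ T
      · simpa [a, hi, hj] using hT hi hj hij
      · simp [a, hj]
    · simp [a, hi]
  calc ∑ i ∈ T, b i = ∑ i ∈ T, singleMinded B b i (a i) :=
        sum_congr rfl fun i hi => by simp [singleMinded, a, hi]
    _ ≤ ∑ i ∈ S, singleMinded B b i (a i) :=
        sum_le_sum_of_subset_of_nonneg hTS fun i _ _ => by
          unfold singleMinded; split_ifs <;> simp [hb]
    _ ≤ _ := sum_le_coalW ha

lemma coalW_singleMinded_le_sum_prices (p : Fin m → ℝ) (hp : ∀ x, 0 ≤ p x)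
    (h : ∀ i ∈ S, b i ≤ ∑ x ∈ B i, p x) : coalW (singleMinded B b) S ≤ ∑ x, p x :=
  coalW_le_sum_prices p hp fun i hi A => by
    unfold singleMinded
    split_ifs with hA
    · exact (h i hi).trans (sum_le_sum_of_subset_of_nonneg hA fun x _ _ => hp x)
    · exact sum_nonneg fun x _ => hp x

end SingleMinded

namespace MRCExample

variable (r : ℕ)

def bundle (i : Fin (r + 4)) : Finset (Fin (r + 2)) :=
  if h : (i : ℕ) < r + 2 then {⟨i, h⟩} else univ.erase ⟨i - 2, by omega⟩

noncomputable def bid (i : Fin (r + 4)) : ℝ :=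
  if (i : ℕ) < r + 2 then 1 else r

noncomputable abbrev valuation : Fin (r + 4) → Finset (Fin (r + 2)) → ℝ :=
  singleMinded (bundle r) (bid r)

def unitBidders : Finset (Fin (r + 4)) := {i | (i : ℕ) < r + 2}

def smallBidders : Finset (Fin (r + 4)) := {i | (i : ℕ) < r}

def pivotA : Fin (r + 4) := ⟨r, by omega⟩

def pivotB : Fin (r + 4) := ⟨r + 1, by omega⟩

variable {r}

lemma bid_nonneg (i : Fin (r + 4)) : 0 ≤ bid r i := by
  unfold bid; split_ifs <;> positivity

lemma valuation_empty (i : Fin (r + 4)) : valuation r i ∅ = 0 := by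
  have hne : bundle r i ≠ ∅ := by
    unfold bundle
    split_ifs
    · simp
    · rw [← nonempty_iff_ne_empty, ← card_pos, card_erase_of_mem (mem_univ _)]
      simp
  simp [singleMinded, hne]

lemma valuation_nonneg (i : Fin (r + 4)) (A : Finset (Fin (r + 2))) : 0 ≤ valuation r i A := by
  unfold valuation singleMinded
  split_ifs
  · exact bid_nonneg i
  · rfl

lemma mem_unitBidders {i : Fin (r + 4)} : i ∈ unitBidders r ↔ (i : ℕ) < r + 2 := by
  simp [unitBidders]

lemma mem_smallBidders {i : Fin (r + 4)} : i ∈ smallBidders r ↔ (i : ℕ) < r := by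
  simp [smallBidders]

lemma card_unitBidders : #(unitBidders r) = r + 2 := by
  simp [unitBidders, Fin.card_filter_val_lt]

lemma card_smallBidders : #(smallBidders r) = r := by
  simp [smallBidders, Fin.card_filter_val_lt]

variable {S : Finset (Fin (r + 4))}

lemma coalW_valuation_le_sum_prices (p : Fin (r + 2) → ℝ) (hp : ∀ x, 0 ≤ p x)
    (hunit : ∀ i ∈ S, ∀ h : (i : ℕ) < r + 2, 1 ≤ p ⟨i, h⟩)
    (hbig : ∀ x : Fin (r + 2), r ≤ (x : ℕ) → r + p x ≤ ∑ y, p y) :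
    coalW (valuation r) S ≤ ∑ x, p x := by
  refine coalW_singleMinded_le_sum_prices p hp fun i hi => ?_
  unfold bundle bid
  split_ifs with h
  · simpa using hunit i hi h
  · rw [sum_erase_eq_sub (mem_univ _)]
    linarith [hbig ⟨i - 2, by omega⟩ (by simp; omega)]

lemma coalW_le_add_two (S : Finset (Fin (r + 4))) : coalW (valuation r) S ≤ r + 2 := by
  have := coalW_valuation_le_sum_prices (S := S) (fun _ => 1) (fun _ => zero_le_one)
    (fun _ _ _ => le_rfl) (fun _ _ => by simp)
  simpa [add_comm] using this

lemma coalW_le_add_one_of_notMem (x : Fin (r + 2)) (hx : Fin.castAdd 2 x ∉ S) :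
    coalW (valuation r) S ≤ r + 1 := by
  have hsum : ∑ y, (if y = x then 0 else 1 : ℝ) = r + 1 := by
    simp [sum_ite, filter_ne', card_erase_of_mem]
  refine hsum ▸ coalW_valuation_le_sum_prices _ (fun y => by split_ifs <;> norm_num)
    (fun i hi h => ?_) (fun y _ => by split_ifs <;> simp [hsum])
  have : (⟨i, h⟩ : Fin (r + 2)) ≠ x := by rintro rfl; exact hx hi
  simp [this]

lemma coalW_le_of_forall_lt (hS : ∀ i ∈ S, (i : ℕ) < r + 2 → (i : ℕ) < r) :
    coalW (valuation r) S ≤ r := by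
  have := coalW_valuation_le_sum_prices (S := S) (fun y => if (y : ℕ) < r then 1 else 0)
    (fun y => by split_ifs <;> norm_num)
    (fun i hi h => by simp [hS i hi h])
    (fun y hy => by simp [Fin.card_filter_val_lt, not_lt.mpr hy])
  simpa [Fin.card_filter_val_lt] using this

lemma le_coalW_of_unitBidders_subset (hS : unitBidders r ⊆ S) :
    r + 2 ≤ coalW (valuation r) S := by
  have hdisj : (unitBidders r : Set (Fin (r + 4))).PairwiseDisjoint (bundle r) := by
    intro i hi j hj hij
    simp [Function.onFun, bundle, mem_unitBidders.mp hi, mem_unitBidders.mp hj, Fin.ext_iff,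
      Fin.val_ne_iff.mpr hij]
  have hbid : ∑ i ∈ unitBidders r, bid r i = r + 2 := by
    rw [sum_congr rfl fun i hi => show bid r i = 1 from if_pos (mem_unitBidders.mp hi)]
    simp [card_unitBidders]
  exact hbid ▸ sum_le_coalW_singleMinded bid_nonneg hS hdisj

lemma le_coalW_of_pair {i j : Fin (r + 4)} (hij : (i : ℕ) + 2 = j) (hj : r + 2 ≤ (j : ℕ))
    (hiS : i ∈ S) (hjS : j ∈ S) : r + 1 ≤ coalW (valuation r) S := by
  have hdisj : (({i, j} : Finset _) : Set (Fin (r + 4))).PairwiseDisjoint (bundle r) := by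
    rw [coe_pair]
    refine Set.pairwise_pair_of_symm.mpr fun _ => ?_
    have hi : (i : ℕ) < r + 2 := by omega
    simp only [Function.onFun, bundle, dif_pos hi, dif_neg (show ¬ (j : ℕ) < r + 2 by omega),
      disjoint_singleton_left, mem_erase, ne_eq, Fin.ext_iff]
    omega
  have := sum_le_coalW_singleMinded bid_nonneg
    (insert_subset hiS (singleton_subset_iff.mpr hjS)) hdisj
  rw [sum_pair (by omega)] at this
  simp only [bid, if_pos (show (i : ℕ) < r + 2 by omega),
    if_neg (show ¬ (j : ℕ) < r + 2 by omega)] at this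
  linarith

variable (r) in
lemma coalW_univ : coalW (valuation r) univ = r + 2 :=
  (coalW_le_add_two _).antisymm (le_coalW_of_unitBidders_subset (subset_univ _))

variable (r) in
lemma winners_eq : winners (valuation r) = unitBidders r := by
  ext i
  simp only [winners, mem_filter, mem_univ, true_and, coalW_univ, mem_unitBidders]
  constructor
  · intro hlt
    by_contra hi
    have := le_coalW_of_unitBidders_subset (S := univ \ {i}) fun j hj => by
      simp only [mem_sdiff, mem_univ, mem_singleton, true_and]
      rintro rfl
      exact hi (mem_unitBidders.mp hj)
    linarith
  · intro hi
    have := coalW_le_add_one_of_notMem (S := univ \ {i}) ⟨i, hi⟩ (by simp)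
    linarith

lemma single_unitBidder_mem_corePoly {j : Fin (r + 4)} (hj : j ∈ unitBidders r) :
    Pi.single j 1 ∈ CorePoly (coalW (valuation r)) := by
  refine single_mem_corePoly zero_le_one (fun S => ?_) fun S hjS => ?_
  · rw [coalW_univ]
    exact coalW_le_add_two S
  · rw [coalW_univ]
    have := coalW_le_add_one_of_notMem (S := S) ⟨j, mem_unitBidders.mp hj⟩ hjS
    linarith

variable (r) in
lemma exists_mem_corePoly_pos :
    ∃ π ∈ CorePoly (coalW (valuation r)), ∀ i ∈ unitBidders r, 0 < π i := by
  refine ⟨∑ j ∈ unitBidders r, (1 / (r + 2 : ℝ)) • Pi.single j 1,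
    convex_corePoly.sum_mem (fun _ _ => by positivity) ?_
      fun j hj => single_unitBidder_mem_corePoly hj, fun i hi => ?_⟩
  · rw [sum_const, card_unitBidders, nsmul_eq_mul]
    field_simp
    push_cast
    ring
  · simp [Finset.sum_apply, Pi.single_apply, hi]
    positivity

variable (r) in
lemma pivots_mem_corePoly :
    Pi.single (pivotA r) 1 + Pi.single (pivotB r) 1 ∈ CorePoly (coalW (valuation r)) := by
  refine ⟨fun i => ?_, fun S => ?_⟩
  · simp only [Pi.add_apply, Pi.single_apply]
    split_ifs <;> norm_num
  · rw [coalW_univ]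
    simp only [Pi.add_apply]
    rw [sum_add_distrib, sum_pi_single', sum_pi_single']
    by_cases hA : pivotA r ∈ S <;> by_cases hB : pivotB r ∈ S <;>
      simp only [mem_sdiff, mem_univ, hA, hB, true_and, not_true, not_false_eq_true, if_true,
        if_false]
    · linarith [coalW_le_add_two S]
    · linarith [coalW_le_add_one_of_notMem (S := S) ⟨r + 1, by omega⟩ hB]
    · linarith [coalW_le_add_one_of_notMem (S := S) ⟨r, by omega⟩ hA]
    · have := coalW_le_of_forall_lt (S := S) fun i hi hlt => by
        have hiA : i ≠ pivotA r := fun h => hA (h ▸ hi)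
        have hiB : i ≠ pivotB r := fun h => hB (h ▸ hi)
        simp only [ne_eq, Fin.ext_iff, pivotA, pivotB] at hiA hiB
        omega
      linarith

lemma sum_pivots :
    ∑ i, (Pi.single (pivotA r) 1 + Pi.single (pivotB r) 1 : Fin (r + 4) → ℝ) i = 2 := by
  norm_num [sum_add_distrib]

lemma sum_add_sum_smallBidders_le_two {π : Fin (r + 4) → ℝ}
    (hπ : π ∈ CorePoly (coalW (valuation r))) :
    ∑ i, π i + ∑ i ∈ smallBidders r, π i ≤ 2 := by
  let TA : Finset (Fin (r + 4)) := {i | (i : ℕ) ≤ r}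
  let TB : Finset (Fin (r + 4)) := {i | (i : ℕ) < r ∨ (i : ℕ) = r + 1}
  have hTA : ∑ i ∈ TA, π i ≤ 1 := by
    have := le_coalW_of_pair (S := univ \ TA) (i := ⟨r + 1, by omega⟩)
      (j := ⟨r + 3, by omega⟩)
      rfl (by simp) (by simp [TA]) (by simp [TA])
    linarith [sum_le_of_mem_corePoly hπ TA, coalW_univ r]
  have hTB : ∑ i ∈ TB, π i ≤ 1 := by
    have := le_coalW_of_pair (S := univ \ TB) (i := ⟨r, by omega⟩)
      (j := ⟨r + 2, by omega⟩)
      rfl (by simp) (by simp [TB]) (by simp [TB])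
    linarith [sum_le_of_mem_corePoly hπ TB, coalW_univ r]
  have hlosers : ∑ i ∈ unitBidders r, π i = ∑ i, π i :=
    sum_subset (subset_univ _) fun i _ hi =>
      eq_zero_of_mem_corePoly_of_notMem_winners hπ (by rwa [winners_eq])
  have hunion : TA ∪ TB = unitBidders r := by
    ext i
    simp only [mem_union, mem_filter, mem_univ, true_and, mem_unitBidders, TA, TB]
    omega
  have hinter : TA ∩ TB = smallBidders r := by
    ext i
    simp only [mem_inter, mem_filter, mem_univ, true_and, mem_smallBidders, TA, TB]
    omega
  have := sum_union_inter (s₁ := TA) (s₂ := TB) (f := π)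
  rw [hunion, hinter, hlosers] at this
  linarith

lemma eq_zero_of_mem_smallBidders_of_isMax {π : Fin (r + 4) → ℝ}
    (hπ : π ∈ CorePoly (coalW (valuation r)))
    (hmax : ∀ π' ∈ CorePoly (coalW (valuation r)), ∑ i, π' i ≤ ∑ i, π i) :
    ∀ i ∈ smallBidders r, π i = 0 := by
  have htwo := sum_pivots ▸ hmax _ (pivots_mem_corePoly r)
  have hsmall := sum_add_sum_smallBidders_le_two hπ
  refine (sum_eq_zero_iff_of_nonneg fun i _ => hπ.1 i).mp ?_
  exact le_antisymm (by linarith) (sum_nonneg fun i _ => hπ.1 i)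

end MRCExample

open MRCExample in
/-- Unfairness of the MRC rule: there are auctions where some core outcome gives every
winner positive utility, yet every MRC outcome gives k-2 winners zero utility. -/
theorem mrc_unfairness (k : ℕ) (hk : 3 ≤ k) :
    ∃ (n m : ℕ) (v : Fin n → Finset (Fin m) → ℝ),
      (∀ i, v i ∅ = 0) ∧ (∀ i S, 0 ≤ v i S) ∧ (winners v).card = k ∧
      (∃ π ∈ CorePoly (coalW v), ∀ i ∈ winners v, 0 < π i) ∧
      ∀ π ∈ CorePoly (coalW v),
        (∀ π' ∈ CorePoly (coalW v), ∑ i, π' i ≤ ∑ i, π i) →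
        k - 2 ≤ (@Finset.filter _ (fun i => π i = 0) (Classical.decPred _) (winners v)).card := by
  obtain ⟨r, rfl⟩ : ∃ r, k = r + 2 := ⟨k - 2, by omega⟩
  refine ⟨r + 4, r + 2, valuation r, valuation_empty, valuation_nonneg,
    by rw [winners_eq, card_unitBidders], winners_eq r ▸ exists_mem_corePoly_pos r,
    fun π hπ hmax => ?_⟩
  have hzero := eq_zero_of_mem_smallBidders_of_isMax hπ hmax
  have hsub : smallBidders r ⊆ unitBidders r := fun i hi =>
    mem_unitBidders.mpr (by have := mem_smallBidders.mp hi; omega)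
  calc r + 2 - 2 = #(smallBidders r) := by rw [card_smallBidders, Nat.add_sub_cancel]
    _ ≤ _ := card_le_card fun i hi => mem_filter.mpr ⟨winners_eq r ▸ hsub hi, hzero i hi⟩
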